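/- Let N and K be positive integers, let w_1, …, w_K and h̃ be vectors in ℂ^N, let γ ≥ 0, σ² ≥ 0, δ ≥ 0, fix k ∈ {1, …, K}, and set ε = δ² + 2δ‖h̃‖. If |w_k†h̃|² − ε‖w_k‖² − γ·Σ_{i≠k} ( |w_i†h̃|² + ε‖w_i‖² ) ≥ σ²γ, then for every h ∈ ℂ^N with ‖h − h̃‖ ≤ δ one has |w_k†h|² ≥ γ·(σ² + Σ_{i≠k} |w_i†h|²); that is, the strictly bounded (SBCS) constraint guarantees the SINR constraint for every channel realization in the uncertainty ball. -/

import Mathlib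

/-!
Moving the channel from `h'` to a point `h` of the ball of radius `δ` changes `|u†h|` by at most
`‖u‖ δ` (Cauchy–Schwarz), while `|u†h'| ≤ ‖u‖ ‖h'‖`; hence `|u†h|²` differs from `|u†h'|²` by at
most `(δ² + 2δ‖h'‖) ‖u‖² = ε ‖u‖²`. The SBCS constraint is the SINR constraint at `h'` with the
signal power lowered and every interference power raised by this worst-case amount.
-/

open BigOperators Finset

/-- The Euclidean norm of a complex vector. -/
noncomputable def vnorm {N : ℕ} (v : Fin N → ℂ) : ℝ :=
  Real.sqrt (∑ i, ‖v i‖ ^ 2)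

/-- The standard inner product `u† v` of two complex vectors. -/
noncomputable def dotc {N : ℕ} (u v : Fin N → ℂ) : ℂ :=
  ∑ i, star (u i) * v i

theorem abs_sq_sub_sq_le_of_abs_sub_le {a b d m : ℝ} (ha : 0 ≤ a) (hb : 0 ≤ b)
    (hab : |b - a| ≤ d) (ham : a ≤ m) : |b ^ 2 - a ^ 2| ≤ d ^ 2 + 2 * d * m := by
  have hd : 0 ≤ d := (abs_nonneg _).trans hab
  have hsum : b + a ≤ 2 * m + d := by linarith [le_abs_self (b - a)]
  calc |b ^ 2 - a ^ 2| = |b - a| * (b + a) := by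
        rw [show b ^ 2 - a ^ 2 = (b - a) * (b + a) by ring, abs_mul,
          abs_of_nonneg (add_nonneg hb ha)]
    _ ≤ d * (2 * m + d) := mul_le_mul hab hsum (by linarith) hd
    _ = d ^ 2 + 2 * d * m := by ring

open scoped InnerProductSpace in
theorem abs_norm_inner_sq_sub_le {𝕜 E : Type*} [RCLike 𝕜] [NormedAddCommGroup E]
    [InnerProductSpace 𝕜 E] (u : E) {x y : E} {δ : ℝ} (hxy : ‖x - y‖ ≤ δ) :
    |‖⟪u, x⟫_𝕜‖ ^ 2 - ‖⟪u, y⟫_𝕜‖ ^ 2| ≤ (δ ^ 2 + 2 * δ * ‖y‖) * ‖u‖ ^ 2 := by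
  have hclose : |‖⟪u, x⟫_𝕜‖ - ‖⟪u, y⟫_𝕜‖| ≤ ‖u‖ * δ :=
    calc |‖⟪u, x⟫_𝕜‖ - ‖⟪u, y⟫_𝕜‖| ≤ ‖⟪u, x - y⟫_𝕜‖ := by
          rw [inner_sub_right]; exact abs_norm_sub_norm_le _ _
      _ ≤ ‖u‖ * ‖x - y‖ := norm_inner_le_norm _ _
      _ ≤ ‖u‖ * δ := by gcongr
  calc _ ≤ (‖u‖ * δ) ^ 2 + 2 * (‖u‖ * δ) * (‖u‖ * ‖y‖) :=
        abs_sq_sub_sq_le_of_abs_sub_le (norm_nonneg _) (norm_nonneg _) hclose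
          (norm_inner_le_norm _ _)
    _ = (δ ^ 2 + 2 * δ * ‖y‖) * ‖u‖ ^ 2 := by ring

theorem vnorm_eq_norm_toLp {N : ℕ} (v : Fin N → ℂ) : vnorm v = ‖WithLp.toLp 2 v‖ := by
  simp [vnorm, EuclideanSpace.norm_eq]

theorem dotc_eq_inner_toLp {N : ℕ} (u v : Fin N → ℂ) :
    dotc u v = inner ℂ (WithLp.toLp 2 u) (WithLp.toLp 2 v) := by
  simp [dotc, PiLp.inner_apply, mul_comm]

theorem abs_norm_dotc_sq_sub_le {N : ℕ} (u : Fin N → ℂ) {h h' : Fin N → ℂ} {δ : ℝ}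
    (hball : vnorm (h - h') ≤ δ) :
    |‖dotc u h‖ ^ 2 - ‖dotc u h'‖ ^ 2| ≤ (δ ^ 2 + 2 * δ * vnorm h') * vnorm u ^ 2 := by
  simp only [dotc_eq_inner_toLp, vnorm_eq_norm_toLp, WithLp.toLp_sub] at hball ⊢
  exact abs_norm_inner_sq_sub_le _ hball

theorem stmt12_general (N K : ℕ)
    (w : Fin K → Fin N → ℂ) (h' : Fin N → ℂ)
    (γ : ℝ) (hγ : 0 ≤ γ) (σsq : ℝ) (δ : ℝ)
    (k : Fin K)
    (ε : ℝ) (hε : ε = δ ^ 2 + 2 * δ * vnorm h')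
    (hSBCS : ‖dotc (w k) h'‖ ^ 2 - ε * vnorm (w k) ^ 2
        - γ * ∑ i ∈ Finset.univ.erase k,
            (‖dotc (w i) h'‖ ^ 2 + ε * vnorm (w i) ^ 2)
        ≥ σsq * γ) :
    ∀ h : Fin N → ℂ, vnorm (h - h') ≤ δ →
      ‖dotc (w k) h‖ ^ 2 ≥
        γ * (σsq + ∑ i ∈ Finset.univ.erase k, ‖dotc (w i) h‖ ^ 2) := by
  intro h hball
  subst hε
  have hsignal := (abs_le.mp (abs_norm_dotc_sq_sub_le (w k) hball)).1
  have hinterference : ∑ i ∈ univ.erase k, ‖dotc (w i) h‖ ^ 2 ≤ ∑ i ∈ univ.erase k,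
      (‖dotc (w i) h'‖ ^ 2 + (δ ^ 2 + 2 * δ * vnorm h') * vnorm (w i) ^ 2) :=
    sum_le_sum fun i _ => by linarith [(abs_le.mp (abs_norm_dotc_sq_sub_le (w i) hball)).2]
  linarith [mul_le_mul_of_nonneg_left hinterference hγ]

theorem stmt12 (N K : ℕ) (hN : 0 < N) (hK : 0 < K)
    (w : Fin K → Fin N → ℂ) (h' : Fin N → ℂ)
    (γ : ℝ) (hγ : 0 ≤ γ) (σsq : ℝ) (hσ : 0 ≤ σsq) (δ : ℝ) (hδ : 0 ≤ δ)
    (k : Fin K)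
    (ε : ℝ) (hε : ε = δ ^ 2 + 2 * δ * vnorm h')
    (hSBCS : ‖dotc (w k) h'‖ ^ 2 - ε * vnorm (w k) ^ 2
        - γ * ∑ i ∈ Finset.univ.erase k,
            (‖dotc (w i) h'‖ ^ 2 + ε * vnorm (w i) ^ 2)
        ≥ σsq * γ) :
    ∀ h : Fin N → ℂ, vnorm (h - h') ≤ δ →
      ‖dotc (w k) h‖ ^ 2 ≥
        γ * (σsq + ∑ i ∈ Finset.univ.erase k, ‖dotc (w i) h‖ ^ 2) :=
  stmt12_general N K w h' γ hγ σsq δ k ε hε hSBCS
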